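/- With the definitions a(x,w) and ā(x) as above, sup over all w of λ_max((1/N)∑_{i=1}^N a(x(i),w) a(x(i),w)ᵀ) equals λ_max((1/N)∑_{i=1}^N ā(x(i)) ā(x(i))ᵀ). -/

import Mathlib

/-!
Let `C = (1/N) ∑ᵢ xᵢxᵢᵀ` and `S̄ = (1/N) ∑ᵢ ā(xᵢ)ā(xᵢ)ᵀ`. For every `w`, the quadratic form of
`(1/N) ∑ᵢ a(xᵢ,w)a(xᵢ,w)ᵀ` at `v = (v₁, …, v_k)` is `(1/N) ∑ᵢ (∑ⱼ 𝟙ᵢⱼ xᵢᵀvⱼ)²`, which by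
Cauchy–Schwarz is at most `k ∑ⱼ vⱼᵀCvⱼ`. Testing `S̄` on the stacked vector `(u, …, u)` gives
`k uᵀCu ≤ λ_max(S̄) |u|²`, so every `a(·,w)` matrix is dominated by `λ_max(S̄) · I`, and `w = 0`
gives `S̄` itself.
-/

/-- The stacked vector `a(x,w)` whose `j`-th block is `𝟙{xᵀwʲ ≥ 0}·x`. -/
noncomputable def avec {k d : ℕ} (x : Fin d → ℝ) (w : Fin k → Fin d → ℝ) :
    Fin k × Fin d → ℝ :=
  fun p => (if 0 ≤ ∑ i, x i * w p.1 i then (1 : ℝ) else 0) * x p.2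

/-- The stacked vector `ā(x)` consisting of `k` copies of `x`. -/
def abar {k d : ℕ} (x : Fin d → ℝ) : Fin k × Fin d → ℝ := fun p => x p.2

open Matrix Finset

namespace Matrix

variable {n : Type*} [Fintype n] [DecidableEq n]

open scoped MatrixOrder in
theorem IsHermitian.forall_dotProduct_mulVec_le_iff {A : Matrix n n ℝ} (hA : A.IsHermitian)
    (C : ℝ) : (∀ v : n → ℝ, v ⬝ᵥ A *ᵥ v ≤ C * (v ⬝ᵥ v)) ↔ ∀ i, hA.eigenvalues i ≤ C := by
  have h_spectrum : (∀ i, hA.eigenvalues i ≤ C) ↔ A ≤ algebraMap ℝ _ C := by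
    rw [le_algebraMap_iff_spectrum_le, hA.spectrum_real_eq_range_eigenvalues]
    simp
  have h_herm : (algebraMap ℝ (Matrix n n ℝ) C - A).IsHermitian :=
    (isHermitian_diagonal _).sub hA
  rw [h_spectrum, le_iff, posSemidef_iff_dotProduct_mulVec, and_iff_right h_herm]
  simp only [Algebra.algebraMap_eq_smul_one, sub_mulVec, smul_mulVec, one_mulVec, star_trivial,
    dotProduct_sub, dotProduct_smul, smul_eq_mul, sub_nonneg]

theorem IsHermitian.dotProduct_mulVec_le_iSup_eigenvalues_mul {A : Matrix n n ℝ}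
    (hA : A.IsHermitian) (v : n → ℝ) : v ⬝ᵥ A *ᵥ v ≤ (⨆ i, hA.eigenvalues i) * (v ⬝ᵥ v) :=
  (hA.forall_dotProduct_mulVec_le_iff _).2 (le_ciSup (Finite.bddAbove_range _)) v

theorem IsHermitian.iSup_eigenvalues_le {A : Matrix n n ℝ} (hA : A.IsHermitian) {C : ℝ}
    (hC : 0 ≤ C) (h : ∀ v : n → ℝ, v ⬝ᵥ A *ᵥ v ≤ C * (v ⬝ᵥ v)) : ⨆ i, hA.eigenvalues i ≤ C :=
  Real.iSup_le ((hA.forall_dotProduct_mulVec_le_iff C).1 h) hC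

theorem IsHermitian.eigenvalues_congr {A B : Matrix n n ℝ} (hA : A.IsHermitian)
    (hB : B.IsHermitian) (h : A = B) : hA.eigenvalues = hB.eigenvalues := by
  subst h; rfl

end Matrix

noncomputable def secondMoment {n : Type*} [Fintype n] {N : ℕ} (a : Fin N → n → ℝ) :
    Matrix n n ℝ :=
  (N : ℝ)⁻¹ • ∑ i, vecMulVec (a i) (a i)

section secondMoment

variable {n : Type*} [Fintype n] {N : ℕ}

theorem dotProduct_secondMoment_mulVec (a : Fin N → n → ℝ) (v : n → ℝ) :
    v ⬝ᵥ secondMoment a *ᵥ v = (N : ℝ)⁻¹ * ∑ i, (a i ⬝ᵥ v) ^ 2 := by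
  rw [secondMoment, smul_mulVec, dotProduct_smul, sum_mulVec, dotProduct_sum, smul_eq_mul]
  congr 1
  refine sum_congr rfl fun i _ => ?_
  rw [vecMulVec_mulVec, op_smul_eq_smul, dotProduct_smul, smul_eq_mul, dotProduct_comm v, sq]

theorem posSemidef_secondMoment (a : Fin N → n → ℝ) : (secondMoment a).PosSemidef := by
  refine .smul (posSemidef_sum _ fun i _ => ?_) (by positivity)
  simpa using posSemidef_vecMulVec_self_star (a i)

end secondMoment

section stacked

variable {k d : ℕ}

theorem avec_zero (x : Fin d → ℝ) : avec x (0 : Fin k → Fin d → ℝ) = abar x := by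
  funext p; simp [avec, abar]

theorem avec_dotProduct (x : Fin d → ℝ) (w : Fin k → Fin d → ℝ) (v : Fin k × Fin d → ℝ) :
    avec x w ⬝ᵥ v =
      ∑ j, (if 0 ≤ ∑ i, x i * w j i then (1 : ℝ) else 0) * (x ⬝ᵥ Function.curry v j) := by
  simp only [dotProduct, Fintype.sum_prod_type, avec, mul_sum, Function.curry_apply, mul_assoc]

theorem sq_avec_dotProduct_le (x : Fin d → ℝ) (w : Fin k → Fin d → ℝ) (v : Fin k × Fin d → ℝ) :
    (avec x w ⬝ᵥ v) ^ 2 ≤ k * ∑ j, (x ⬝ᵥ Function.curry v j) ^ 2 := by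
  rw [avec_dotProduct]
  refine sq_sum_le_card_mul_sum_sq.trans ?_
  rw [card_univ, Fintype.card_fin]
  refine mul_le_mul_of_nonneg_left (sum_le_sum fun j _ => ?_) (Nat.cast_nonneg _)
  split_ifs <;> simp [sq_nonneg]

theorem abar_dotProduct_abar (x u : Fin d → ℝ) : abar (k := k) x ⬝ᵥ abar u = k * (x ⬝ᵥ u) := by
  simp [dotProduct, abar, Fintype.sum_prod_type]

end stacked

section secondMoment_stacked

variable {k d N : ℕ} (X : Fin N → Fin d → ℝ)

theorem dotProduct_secondMoment_abar_mulVec_abar (u : Fin d → ℝ) :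
    abar u ⬝ᵥ secondMoment (fun i => abar (k := k) (X i)) *ᵥ abar u =
      k ^ 2 * (u ⬝ᵥ secondMoment X *ᵥ u) := by
  simp only [dotProduct_secondMoment_mulVec, abar_dotProduct_abar, mul_pow, ← mul_sum]
  ring

theorem dotProduct_secondMoment_avec_mulVec_le (w : Fin k → Fin d → ℝ) (v : Fin k × Fin d → ℝ) :
    v ⬝ᵥ secondMoment (fun i => avec (X i) w) *ᵥ v ≤
      k * ∑ j, Function.curry v j ⬝ᵥ secondMoment X *ᵥ Function.curry v j := by
  simp only [dotProduct_secondMoment_mulVec]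
  calc (N : ℝ)⁻¹ * ∑ i, (avec (X i) w ⬝ᵥ v) ^ 2
      ≤ (N : ℝ)⁻¹ * ∑ i, k * ∑ j, (X i ⬝ᵥ Function.curry v j) ^ 2 := by
        gcongr with i
        exact sq_avec_dotProduct_le (X i) w v
    _ = k * ∑ j, (N : ℝ)⁻¹ * ∑ i, (X i ⬝ᵥ Function.curry v j) ^ 2 := by
        simp only [mul_sum, mul_left_comm (N : ℝ)⁻¹]
        exact sum_comm

theorem mul_dotProduct_secondMoment_mulVec_le (hk : 0 < k) {L : ℝ}
    (hL : ∀ u, u ⬝ᵥ secondMoment (fun i => abar (k := k) (X i)) *ᵥ u ≤ L * (u ⬝ᵥ u))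
    (u : Fin d → ℝ) : k * (u ⬝ᵥ secondMoment X *ᵥ u) ≤ L * (u ⬝ᵥ u) := by
  have h := hL (abar u)
  rw [dotProduct_secondMoment_abar_mulVec_abar, abar_dotProduct_abar] at h
  refine le_of_mul_le_mul_left ?_ (Nat.cast_pos.2 hk : (0 : ℝ) < k)
  linarith

theorem dotProduct_secondMoment_avec_mulVec_le_of_abar {L : ℝ}
    (hL : ∀ u, u ⬝ᵥ secondMoment (fun i => abar (k := k) (X i)) *ᵥ u ≤ L * (u ⬝ᵥ u))
    (w : Fin k → Fin d → ℝ) (v : Fin k × Fin d → ℝ) :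
    v ⬝ᵥ secondMoment (fun i => avec (X i) w) *ᵥ v ≤ L * (v ⬝ᵥ v) :=
  calc v ⬝ᵥ secondMoment (fun i => avec (X i) w) *ᵥ v
      ≤ ∑ j, k * (Function.curry v j ⬝ᵥ secondMoment X *ᵥ Function.curry v j) := by
        rw [← mul_sum]; exact dotProduct_secondMoment_avec_mulVec_le X w v
    _ ≤ ∑ j, L * (Function.curry v j ⬝ᵥ Function.curry v j) :=
        sum_le_sum fun j _ => mul_dotProduct_secondMoment_mulVec_le X j.pos hL _
    _ = L * (v ⬝ᵥ v) := by
        rw [← mul_sum, dotProduct, Fintype.sum_prod_type]; rfl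

end secondMoment_stacked

theorem sup_lammax_eq_lammax_abar {k d N : ℕ} (X : Fin N → Fin d → ℝ)
    (hS : ∀ w : Fin k → Fin d → ℝ,
      ((N : ℝ)⁻¹ • ∑ i, Matrix.vecMulVec (avec (X i) w) (avec (X i) w)).IsHermitian)
    (hSbar : ((N : ℝ)⁻¹ •
      ∑ i, Matrix.vecMulVec (abar (k := k) (X i)) (abar (k := k) (X i))).IsHermitian) :
    ⨆ w : Fin k → Fin d → ℝ, ⨆ p, (hS w).eigenvalues p = ⨆ p, hSbar.eigenvalues p := by
  set L := ⨆ p, hSbar.eigenvalues p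
  -- needed when `k * d = 0`: then every `⨆ p` is over an empty type, hence `0`
  have hL_nonneg : 0 ≤ L :=
    Real.iSup_nonneg fun p => (posSemidef_secondMoment fun i => abar (X i)).eigenvalues_nonneg p
  have hle : ∀ w, ⨆ p, (hS w).eigenvalues p ≤ L := fun w =>
    (hS w).iSup_eigenvalues_le hL_nonneg <| dotProduct_secondMoment_avec_mulVec_le_of_abar X
      hSbar.dotProduct_mulVec_le_iSup_eigenvalues_mul w
  have h_zero : (hS 0).eigenvalues = hSbar.eigenvalues :=
    IsHermitian.eigenvalues_congr _ _ (by simp only [avec_zero])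
  refine le_antisymm (ciSup_le hle) ?_
  calc L = ⨆ p, (hS 0).eigenvalues p := by rw [h_zero]
    _ ≤ _ := le_ciSup ⟨L, Set.forall_mem_range.2 hle⟩ 0
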